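/- arXiv:1108.3061 — 3 statements merged into one kernel-verified Lean document; each statement's English description precedes it below -/
import Mathlib

section
/- Let $M$ be a topological space and $f : M \times \mathbb{R} \to \mathbb{R}$ a continuous proper function that is strictly increasing along each fiber $\{x\} \times \mathbb{R}$. Let $[c_1, c_2]$ be an interval contained in the range of every function $f_x := f(x, \cdot)$. Then the fiber-wise inverse $\phi : (x, c) \mapsto \inf\{t : f(x,t) = c\}$ is continuous on $M \times [c_1, c_2]$. -/
/-- fiber-wise inverse of a continuous proper function, strictly
increasing along fibers, is continuous on `M × [c₁, c₂]` whenever `[c₁, c₂]`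
lies in the range of every fiber function. -/
theorem stmt0 {M : Type*} [TopologicalSpace M]
    (f : M × ℝ → ℝ) (hf : Continuous f)
    (hproper : ∀ K : Set ℝ, IsCompact K → IsCompact (f ⁻¹' K))
    (hmono : ∀ x : M, StrictMono (fun t => f (x, t)))
    (c₁ c₂ : ℝ) (hc : c₁ ≤ c₂)
    (hrange : ∀ x : M, Set.Icc c₁ c₂ ⊆ Set.range (fun t => f (x, t))) :
    ContinuousOn (fun q : M × ℝ => sInf {t : ℝ | f (q.1, t) = q.2})
      (Set.univ ×ˢ Set.Icc c₁ c₂) := by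
  -- the fiber set is a singleton
  have hsingle : ∀ x c t, f (x, t) = c → {s : ℝ | f (x, s) = c} = {t} := by
    intro x c t ht
    ext s
    simp only [Set.mem_setOf_eq, Set.mem_singleton_iff]
    constructor
    · intro hs
      exact (hmono x).injective (by simpa using hs.trans ht.symm)
    · rintro rfl; exact ht
  have hval : ∀ x c t, f (x, t) = c → sInf {s : ℝ | f (x, s) = c} = t := by
    intro x c t ht
    rw [hsingle x c t ht, csInf_singleton]
  rintro ⟨x₀, c₀⟩ hq
  simp only [Set.mem_prod, Set.mem_univ, true_and] at hq
  obtain ⟨t₀, ht₀⟩ := hrange x₀ hq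
  simp only [] at ht₀
  have hphi0 : sInf {t : ℝ | f (x₀, t) = c₀} = t₀ := hval x₀ c₀ t₀ ht₀
  unfold ContinuousWithinAt
  simp only [Metric.tendsto_nhds, hphi0]
  intro ε hε
  set V : Set (M × ℝ) := {p | f (p.1, t₀ - ε) < p.2 ∧ p.2 < f (p.1, t₀ + ε)} with hV
  have hVopen : IsOpen V := by
    have h1 : IsOpen {p : M × ℝ | f (p.1, t₀ - ε) < p.2} :=
      isOpen_lt (hf.comp (continuous_fst.prodMk continuous_const)) continuous_snd
    have h2 : IsOpen {p : M × ℝ | p.2 < f (p.1, t₀ + ε)} :=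
      isOpen_lt continuous_snd (hf.comp (continuous_fst.prodMk continuous_const))
    exact h1.inter h2
  have hmem : (x₀, c₀) ∈ V := by
    constructor
    · simpa [ht₀] using hmono x₀ (show t₀ - ε < t₀ by linarith)
    · simpa [ht₀] using hmono x₀ (show t₀ < t₀ + ε by linarith)
  have hVn : V ∈ nhdsWithin (x₀, c₀) (Set.univ ×ˢ Set.Icc c₁ c₂) :=
    nhdsWithin_le_nhds (hVopen.mem_nhds hmem)
  filter_upwards [hVn, self_mem_nhdsWithin] with p hpV hps
  obtain ⟨x, c⟩ := p
  simp only [Set.mem_prod, Set.mem_univ, true_and] at hps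
  obtain ⟨t, ht⟩ := hrange x hps
  simp only [] at ht
  rw [hval x c t ht]
  obtain ⟨h1, h2⟩ := hpV
  simp only at h1 h2
  have hl : t₀ - ε < t := (hmono x).lt_iff_lt.mp (by rw [ht]; exact h1)
  have hr : t < t₀ + ε := (hmono x).lt_iff_lt.mp (by rw [ht]; exact h2)
  rw [Real.dist_eq, abs_lt]
  constructor <;> linarith
end

section
/- Let $G$ be a finite connected graph embedded in $\mathbb{R}^d$ with vertex set consisting of 'internal points' and 'boundary points', positive weights on edges, every edge of Euclidean length exactly $2r$ between internal points or $r$ between an internal and a boundary point, and suppose the stress graph is balanced (forces sum to zero at each internal point). If the component is nontrivial (has at least one edge), then every vertex of the component lies in the convex hull of its boundary points; in particular, a nontrivial balanced component contains at least one boundary point. -/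
/-- a nontrivial connected balanced stress graph lies in the convex
hull of its boundary points; in particular it has at least one boundary point. -/
theorem stmt9 {d : ℕ} {ι : Type*} [Fintype ι]
    (G : SimpleGraph ι) [DecidableRel G.Adj] (hconn : G.Connected)
    (pos : ι → EuclideanSpace ℝ (Fin d)) (Bnd : Finset ι)
    (w : ι → ι → ℝ) (hwsymm : ∀ u v, w u v = w v u)
    (hwpos : ∀ u v, G.Adj u v → 0 < w u v)
    (r : ℝ) (hr : 0 < r)
    (hlen_ii : ∀ u v, G.Adj u v → u ∉ Bnd → v ∉ Bnd → ‖pos u - pos v‖ = 2 * r)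
    (hlen_ib : ∀ u v, G.Adj u v → u ∉ Bnd → v ∈ Bnd → ‖pos u - pos v‖ = r)
    (hno_bb : ∀ u v, G.Adj u v → u ∈ Bnd → v ∉ Bnd)
    (hnontrivial : ∃ u v, G.Adj u v)
    (hbal : ∀ u ∉ Bnd,
      ∑ v ∈ G.neighborFinset u, w u v • (‖pos u - pos v‖⁻¹ • (pos u - pos v)) = 0) :
    Bnd.Nonempty ∧ ∀ u : ι, pos u ∈ convexHull ℝ (pos '' ↑Bnd) := by
  obtain ⟨a0, b0, hab0⟩ := hnontrivial
  haveI : Nonempty ι := ⟨a0⟩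
  -- positivity of edge lengths
  have hnorm : ∀ u v, G.Adj u v → u ∉ Bnd → 0 < ‖pos u - pos v‖ := by
    intro u v huv hu
    by_cases hv : v ∈ Bnd
    · rw [hlen_ib u v huv hu hv]; exact hr
    · rw [hlen_ii u v huv hu hv]; linarith
  -- maximum principle step
  have step : ∀ (f : EuclideanSpace ℝ (Fin d) →L[ℝ] ℝ) (M : ℝ),
      (∀ x : ι, f (pos x) ≤ M) → ∀ u, u ∉ Bnd → f (pos u) = M →
      ∀ v, G.Adj u v → f (pos v) = M := by
    intro f M hM u hu huM v huv
    have h0 : ∑ x ∈ G.neighborFinset u,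
        w u x * (‖pos u - pos x‖⁻¹ * (f (pos u) - f (pos x))) = 0 := by
      have := congrArg f (hbal u hu)
      simpa [map_sum, map_sub, smul_eq_mul] using this
    have hnn : ∀ x ∈ G.neighborFinset u,
        0 ≤ w u x * (‖pos u - pos x‖⁻¹ * (f (pos u) - f (pos x))) := by
      intro x hx
      rw [SimpleGraph.mem_neighborFinset] at hx
      have hw := (hwpos u x hx).le
      have hn := (inv_pos.mpr (hnorm u x hx hu)).le
      have hfx : f (pos x) ≤ f (pos u) := huM ▸ hM x
      exact mul_nonneg hw (mul_nonneg hn (sub_nonneg.mpr hfx))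
    have hz := (Finset.sum_eq_zero_iff_of_nonneg hnn).mp h0 v
      (by rwa [SimpleGraph.mem_neighborFinset])
    have hwv := hwpos u v huv
    have hnv := inv_pos.mpr (hnorm u v huv hu)
    have : f (pos u) - f (pos v) = 0 := by
      rcases mul_eq_zero.mp hz with h | h
      · exact absurd h (ne_of_gt hwv)
      · rcases mul_eq_zero.mp h with h' | h'
        · exact absurd h' (ne_of_gt hnv)
        · exact h'
    linarith [huM, this]
  -- propagation along walks
  have prop : ∀ (f : EuclideanSpace ℝ (Fin d) →L[ℝ] ℝ) (M : ℝ),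
      (∀ x : ι, f (pos x) ≤ M) → (∀ x : ι, f (pos x) = M → x ∉ Bnd) →
      ∀ {x y : ι}, G.Walk x y → f (pos x) = M → f (pos y) = M := by
    intro f M hM hint x y p
    induction p with
    | nil => exact id
    | cons hadj p ih =>
      intro hx
      exact ih (step f M hM _ (hint _ hx) hx _ hadj)
  -- Part 1: Bnd is nonempty
  have hBnd : Bnd.Nonempty := by
    by_contra hB
    rw [Finset.not_nonempty_iff_eq_empty] at hB
    set f : EuclideanSpace ℝ (Fin d) →L[ℝ] ℝ := innerSL ℝ (pos a0 - pos b0) with hf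
    obtain ⟨m, -, hm⟩ := Finset.exists_max_image Finset.univ (fun v => f (pos v))
      Finset.univ_nonempty
    have hM : ∀ x : ι, f (pos x) ≤ f (pos m) := fun x => hm x (Finset.mem_univ x)
    have hint : ∀ x : ι, f (pos x) = f (pos m) → x ∉ Bnd := by
      intro x _; simp [hB]
    have ha : f (pos a0) = f (pos m) :=
      prop f _ hM hint (hconn m a0).some rfl
    have hb : f (pos b0) = f (pos m) :=
      prop f _ hM hint (hconn m b0).some rfl
    have hne : (0:ℝ) < ‖pos a0 - pos b0‖ := by
      rw [hlen_ii a0 b0 hab0 (by simp [hB]) (by simp [hB])]; linarith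
    have : f (pos a0) - f (pos b0) = ‖pos a0 - pos b0‖ ^ 2 := by
      rw [hf]
      simp only [innerSL_apply_apply]
      rw [← inner_sub_right, real_inner_self_eq_norm_sq]
    have : (‖pos a0 - pos b0‖ : ℝ) ^ 2 = 0 := by rw [← this, ha, hb]; ring
    nlinarith
  refine ⟨hBnd, ?_⟩
  -- Part 2: every vertex in the convex hull of boundary
  intro u
  by_contra hu
  set C : Set (EuclideanSpace ℝ (Fin d)) := convexHull ℝ (pos '' ↑Bnd) with hC
  have hCconv : Convex ℝ C := convex_convexHull ℝ _
  have hCclosed : IsClosed C :=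
    (Set.Finite.isCompact_convexHull (𝕜 := ℝ) ((Bnd.finite_toSet).image pos)).isClosed
  obtain ⟨f, c, hfc, hcu⟩ := geometric_hahn_banach_closed_point hCconv hCclosed hu
  obtain ⟨m, -, hm⟩ := Finset.exists_max_image Finset.univ (fun v => f (pos v))
    Finset.univ_nonempty
  have hM : ∀ x : ι, f (pos x) ≤ f (pos m) := fun x => hm x (Finset.mem_univ x)
  have hint : ∀ x : ι, f (pos x) = f (pos m) → x ∉ Bnd := by
    intro x hx hxB
    have hmem : pos x ∈ C := subset_convexHull ℝ _ ⟨x, by simpa using hxB, rfl⟩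
    have h1 : f (pos x) < c := hfc _ hmem
    have h2 : c < f (pos u) := hcu
    have h3 : f (pos u) ≤ f (pos m) := hM u
    linarith [hx]
  obtain ⟨b, hb⟩ := hBnd
  have : f (pos b) = f (pos m) := prop f _ hM hint (hconn m b).some rfl
  exact hint b this hb
end

section
/- Let $\mathcal{B} = \prod_{m=1}^d [0, L_m]$ be a rectangular box with $L := L_1 \leq \cdots \leq L_d$, and let $\vec{x} = (x_1, \ldots, x_n)$ be a configuration admitting a balanced, nontrivial stress graph with radius parameter $r$ (internal-internal edges of length $2r$, internal-boundary edges of length $r$, boundary points on $\partial\mathcal{B}$, forces balancing at internal points, and boundary forces on each component summing to zero). Then $r \geq L/(2n)$. -/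
open Metric Set

lemma coord_abs_le' {d : ℕ} (x y : EuclideanSpace ℝ (Fin d)) (m : Fin d) :
    |x m - y m| ≤ ‖x - y‖ := by
  rw [EuclideanSpace.norm_eq]
  have h1 : |x m - y m| = Real.sqrt (‖(x - y) m‖ ^ 2) := by
    rw [Real.sqrt_sq_eq_abs]
    simp [PiLp.sub_apply, Real.norm_eq_abs, abs_abs]
  rw [h1]
  exact Real.sqrt_le_sqrt (Finset.single_le_sum (f := fun i => ‖(x - y) i‖ ^ 2)
    (fun i _ => sq_nonneg _) (Finset.mem_univ m))

lemma coords_eq' {d : ℕ} (x y : EuclideanSpace ℝ (Fin d)) (m : Fin d)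
    (h : ‖x - y‖ = |x m - y m|) : ∀ k, k ≠ m → x k = y k := by
  intro k hk
  have hS : (0:ℝ) ≤ ∑ i, ‖(x - y) i‖ ^ 2 := Finset.sum_nonneg fun i _ => sq_nonneg _
  have hnorm : ‖x - y‖ = Real.sqrt (∑ i, ‖(x - y) i‖ ^ 2) := EuclideanSpace.norm_eq _
  have h2 : ∑ i, ‖(x - y) i‖ ^ 2 = |x m - y m| ^ 2 := by
    have : Real.sqrt (∑ i, ‖(x - y) i‖ ^ 2) = |x m - y m| := by rw [← hnorm, h]
    rw [← this, Real.sq_sqrt hS]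
  have hm : ‖(x - y) m‖ ^ 2 = |x m - y m| ^ 2 := by
    simp [PiLp.sub_apply, Real.norm_eq_abs]
  have h3 : ∑ i ∈ Finset.univ.erase m, ‖(x - y) i‖ ^ 2 = 0 := by
    have hsum := Finset.sum_erase_add Finset.univ (fun i => ‖(x - y) i‖ ^ 2) (Finset.mem_univ m)
    simp only at hsum
    linarith [hsum, h2, hm]
  have h4 := (Finset.sum_eq_zero_iff_of_nonneg (fun i _ => sq_nonneg ‖(x - y) i‖)).mp h3 k
    (Finset.mem_erase.mpr ⟨hk, Finset.mem_univ k⟩)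
  have h5 : x k - y k = 0 := by
    have := sq_eq_zero_iff.mp h4
    simpa [PiLp.sub_apply, Real.norm_eq_abs, abs_eq_zero] using this
  linarith

lemma frontier_box' {d : ℕ} (L : Fin d → ℝ) :
    frontier (Set.univ.pi fun m => Set.Icc 0 (L m)) =
      (Set.univ.pi fun m => Set.Icc 0 (L m)) \ (Set.univ.pi fun m => Set.Ioo 0 (L m)) := by
  rw [frontier, IsClosed.closure_eq (isClosed_set_pi fun a _ => isClosed_Icc),
    interior_pi_set Set.finite_univ]
  simp [interior_Icc]

lemma mem_frontier_box' {d : ℕ} (L : Fin d → ℝ) {y : EuclideanSpace ℝ (Fin d)}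
    (hy : WithLp.ofLp y ∈ Set.univ.pi fun m => Set.Icc 0 (L m)) (m : Fin d)
    (h : y m = 0 ∨ y m = L m) :
    WithLp.ofLp y ∈ frontier (Set.univ.pi fun m => Set.Icc 0 (L m)) := by
  rw [frontier_box']
  refine ⟨hy, fun hmem => ?_⟩
  have := hmem m (Set.mem_univ m)
  rcases h with h | h <;> rw [h] at this <;> exact absurd this.2 (by linarith [this.1])

lemma frontier_box_exists' {d : ℕ} (L : Fin d → ℝ) {y : EuclideanSpace ℝ (Fin d)}
    (hy : WithLp.ofLp y ∈ frontier (Set.univ.pi fun m => Set.Icc 0 (L m))) :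
    ∃ m, y m = 0 ∨ y m = L m := by
  rw [frontier_box'] at hy
  obtain ⟨hy1, hy2⟩ := hy
  rw [Set.mem_pi] at hy2
  push_neg at hy2
  obtain ⟨m, _, hm⟩ := hy2
  have hb := hy1 m (Set.mem_univ m)
  rw [Set.mem_Ioo] at hm
  rw [Set.mem_Icc] at hb
  refine ⟨m, ?_⟩
  rcases eq_or_lt_of_le hb.1 with h | h
  · exact Or.inl h.symm
  · rcases eq_or_lt_of_le hb.2 with h2 | h2
    · exact Or.inr h2
    · exact absurd ⟨h, h2⟩ hm

lemma inner_coord' {d : ℕ} (L : Fin d → ℝ) (hL : ∀ m, 0 ≤ L m)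
    {v : EuclideanSpace ℝ (Fin d)} (hv : WithLp.ofLp v ∈ Set.univ.pi fun m => Set.Icc 0 (L m))
    {r : ℝ} (hr : r ≤ Metric.infDist v (frontier (WithLp.ofLp ⁻¹' Set.univ.pi fun m => Set.Icc 0 (L m))))
    (m : Fin d) : r ≤ v m ∧ v m ≤ L m - r := by
  have hvb : ∀ k, 0 ≤ v k ∧ v k ≤ L k := fun k => Set.mem_Icc.mp (hv k (Set.mem_univ k))
  constructor
  · set y : EuclideanSpace ℝ (Fin d) := WithLp.toLp 2 (Function.update (WithLp.ofLp v) m 0) with hy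
    have hyB : WithLp.ofLp y ∈ Set.univ.pi fun m => Set.Icc 0 (L m) := by
      intro k _
      by_cases hk : k = m
      · subst hk; simp [hy, Set.mem_Icc, hL k]
      · simpa [hy, Function.update_apply, hk] using hvb k
    have hyF : y ∈ frontier (WithLp.ofLp ⁻¹' Set.univ.pi fun m => Set.Icc 0 (L m)) := by
      show y ∈ frontier ((PiLp.homeomorph 2 (fun _ : Fin d => ℝ)) ⁻¹' Set.univ.pi fun m => Set.Icc 0 (L m))
      rw [← Homeomorph.preimage_frontier]
      exact mem_frontier_box' L hyB m (Or.inl (show y m = 0 by simp [hy]))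
    have hdist : dist v y = v m := by
      rw [EuclideanSpace.dist_eq]
      rw [Finset.sum_eq_single m]
      · simp only [hy, WithLp.ofLp_toLp, Function.update_self, Real.dist_eq, sub_zero]
        rw [Real.sqrt_sq_eq_abs, abs_abs]
        exact abs_of_nonneg (hvb m).1
      · intro i _ hi; simp [hy, Function.update_apply, hi]
      · simp
    calc r ≤ _ := hr
      _ ≤ dist v y := Metric.infDist_le_dist_of_mem hyF
      _ = v m := hdist
  · set y : EuclideanSpace ℝ (Fin d) := WithLp.toLp 2 (Function.update (WithLp.ofLp v) m (L m)) with hy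
    have hyB : WithLp.ofLp y ∈ Set.univ.pi fun m => Set.Icc 0 (L m) := by
      intro k _
      by_cases hk : k = m
      · subst hk; simp [hy, Set.mem_Icc, hL k]
      · simpa [hy, Function.update_apply, hk] using hvb k
    have hyF : y ∈ frontier (WithLp.ofLp ⁻¹' Set.univ.pi fun m => Set.Icc 0 (L m)) := by
      show y ∈ frontier ((PiLp.homeomorph 2 (fun _ : Fin d => ℝ)) ⁻¹' Set.univ.pi fun m => Set.Icc 0 (L m))
      rw [← Homeomorph.preimage_frontier]
      exact mem_frontier_box' L hyB m (Or.inr (show y m = L m by simp [hy]))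
    have hdist : dist v y = L m - v m := by
      rw [EuclideanSpace.dist_eq]
      rw [Finset.sum_eq_single m]
      · simp only [hy, WithLp.ofLp_toLp, Function.update_self, Real.dist_eq]
        rw [Real.sqrt_sq_eq_abs, abs_abs, abs_sub_comm]
        exact abs_of_nonneg (by linarith [(hvb m).2])
      · intro i _ hi; simp [hy, Function.update_apply, hi]
      · simp
    have h6 : Metric.infDist v (frontier (WithLp.ofLp ⁻¹' Set.univ.pi fun m => Set.Icc 0 (L m))) ≤ L m - v m :=
      hdist ▸ Metric.infDist_le_dist_of_mem (x := v) hyF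
    have := h6
    linarith


/-- if a configuration of `n` points in the rectangular box
`∏ [0, Lₘ]` (with `L = L₁ ≤ ⋯ ≤ L_d`) admits a balanced nontrivial stress graph
with radius parameter `r`, then `r ≥ L/(2n)`.  The (nontrivial component of
the) stress graph is a connected graph with at least one edge, whose internal
vertices are configuration points (at most `n` of them, at distance `≥ r` from
the boundary), boundary vertices on `∂𝓑`, internal-internal edges of length
`2r`, internal-boundary edges of length `r`, positive weights, forces balancing
at each internal point, and boundary forces summing to zero. -/
theorem stmt12 {d n : ℕ} (hd : 0 < d) (L : Fin d → ℝ) (hLmono : Monotone L)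
    (x : Fin n → EuclideanSpace ℝ (Fin d))
    {ι : Type*} [Fintype ι] [DecidableEq ι]
    (G : SimpleGraph ι) [DecidableRel G.Adj] (hconn : G.Connected)
    (hnontrivial : ∃ u v, G.Adj u v)
    (pos : ι → EuclideanSpace ℝ (Fin d)) (Bnd : Finset ι)
    (w : ι → ι → ℝ) (hwsymm : ∀ u v, w u v = w v u)
    (hwpos : ∀ u v, G.Adj u v → 0 < w u v)
    (r : ℝ) (hr : 0 < r)
    (hcard : (Finset.univ.filter (fun u => u ∉ Bnd)).card ≤ n)
    (hint : ∀ u ∉ Bnd, ∃ i : Fin n, pos u = x i)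
    (hposB : ∀ u : ι, WithLp.ofLp (pos u) ∈ Set.univ.pi fun m => Set.Icc 0 (L m))
    (hbndfront : ∀ u ∈ Bnd,
      WithLp.ofLp (pos u) ∈ frontier (Set.univ.pi fun m => Set.Icc 0 (L m)))
    (hintdist : ∀ u ∉ Bnd,
      r ≤ Metric.infDist (pos u) (frontier (WithLp.ofLp ⁻¹' Set.univ.pi fun m => Set.Icc 0 (L m))))
    (hlen_ii : ∀ u v, G.Adj u v → u ∉ Bnd → v ∉ Bnd → ‖pos u - pos v‖ = 2 * r)
    (hlen_ib : ∀ u v, G.Adj u v → u ∉ Bnd → v ∈ Bnd → ‖pos u - pos v‖ = r)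
    (hno_bb : ∀ u v, G.Adj u v → u ∈ Bnd → v ∉ Bnd)
    (hbal : ∀ u ∉ Bnd,
      ∑ v ∈ G.neighborFinset u, w u v • (‖pos u - pos v‖⁻¹ • (pos u - pos v)) = 0)
    (hbndbal : ∑ u ∈ Bnd, ∑ v ∈ G.neighborFinset u,
      w u v • (‖pos u - pos v‖⁻¹ • (pos u - pos v)) = 0) :
    L ⟨0, hd⟩ / (2 * n) ≤ r := by
  classical
  obtain ⟨p, q, hpq⟩ := hnontrivial
  have hL0 : ∀ m, 0 ≤ L m := fun m => by
    have := Set.mem_Icc.mp (hposB p m (Set.mem_univ m)); linarith [this.1, this.2]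
  -- every vertex has a neighbor
  have hnbr : ∀ u : ι, ∃ v, G.Adj u v := by
    intro u
    obtain ⟨W⟩ := hconn u p
    cases W with
    | nil => exact ⟨q, hpq⟩
    | cons h _ => exact ⟨_, h⟩
  -- there is an internal vertex
  have hintex : ∃ u, u ∉ Bnd := by
    by_cases hp : p ∈ Bnd
    · exact ⟨q, hno_bb p q hpq hp⟩
    · exact ⟨p, hp⟩
  have hinner : ∀ u, u ∉ Bnd → ∀ m, r ≤ pos u m ∧ pos u m ≤ L m - r :=
    fun u hu m => inner_coord' L hL0 (hposB u) (hintdist u hu) m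
  have hn : 0 < n := by
    obtain ⟨u, hu⟩ := hintex
    have : 0 < (Finset.univ.filter (fun u => u ∉ Bnd)).card :=
      Finset.card_pos.mpr ⟨u, by simp [hu]⟩
    omega
  have h2n : (0:ℝ) < 2 * n := by
    have : (0:ℝ) < (n:ℝ) := by exact_mod_cast hn
    linarith
  rw [div_le_iff₀ h2n]
  -- the face lemma
  have face : ∀ u ∈ Bnd, ∀ v, G.Adj u v → ∃ m : Fin d,
      ‖pos u - pos v‖ = r ∧ (∀ k, k ≠ m → pos u k = pos v k) ∧
      ((pos u m = 0 ∧ pos v m = r) ∨ (pos u m = L m ∧ pos v m = L m - r)) := by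
    intro u hu v huv
    have hv : v ∉ Bnd := hno_bb u v huv hu
    have hlen : ‖pos u - pos v‖ = r := by
      rw [← norm_neg]; simp only [neg_sub]; exact hlen_ib v u huv.symm hv hu
    obtain ⟨m, hm⟩ := frontier_box_exists' L (hbndfront u hu)
    have habs := coord_abs_le' (pos u) (pos v) m
    rw [hlen] at habs
    have hv1 := (hinner v hv m).1
    have hv2 := (hinner v hv m).2
    rcases hm with hm | hm
    · have hvm : pos v m = r := by
        have : |pos u m - pos v m| = pos v m := by
          rw [hm]; rw [abs_sub_comm]; simpa using abs_of_nonneg (by linarith : (0:ℝ) ≤ pos v m)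
        linarith [this ▸ habs]
      refine ⟨m, hlen, ?_, Or.inl ⟨hm, hvm⟩⟩
      exact coords_eq' (pos u) (pos v) m (by rw [hlen, hm, hvm]; simp [abs_of_nonneg hr.le])
    · have hvm : pos v m = L m - r := by
        have : |pos u m - pos v m| = L m - pos v m := by
          rw [hm]; exact abs_of_nonneg (by linarith)
        linarith [this ▸ habs]
      refine ⟨m, hlen, ?_, Or.inr ⟨hm, hvm⟩⟩
      refine coords_eq' (pos u) (pos v) m ?_
      rw [hlen, hm, hvm]
      rw [show L m - (L m - r) = r by ring]
      simp [abs_of_nonneg hr.le]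
  -- walk length bound
  have walkbound : ∀ (a b : ι) (P : G.Walk a b),
      ‖pos a - pos b‖ ≤ r * (2 * ((P.support.filter (fun u => u ∉ Bnd)).length : ℝ)
        - (if a ∈ Bnd then 0 else 1) - (if b ∈ Bnd then 0 else 1)) := by
    intro a b P
    induction P with
    | nil =>
      rename_i u
      by_cases hu : u ∈ Bnd
      · simp [SimpleGraph.Walk.support_nil, List.filter_cons, hu]
      · simp [List.filter_cons, hu]
        ring_nf
        norm_num
    | @cons a c b h q ih =>
      have htri : ‖pos a - pos b‖ ≤ ‖pos a - pos c‖ + ‖pos c - pos b‖ := by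
        have : pos a - pos b = (pos a - pos c) + (pos c - pos b) := by abel
        rw [this]; exact norm_add_le _ _
      have hsupp : (SimpleGraph.Walk.cons h q).support = a :: q.support :=
        SimpleGraph.Walk.support_cons h q
      set Iq : ℝ := ((q.support.filter (fun u => u ∉ Bnd)).length : ℝ) with hIq
      have heb : (0:ℝ) ≤ (if b ∈ Bnd then 0 else 1) := by split <;> norm_num
      by_cases ha : a ∈ Bnd
      · have hc : c ∉ Bnd := hno_bb a c h ha
        have hlen : ‖pos a - pos c‖ = r := by
          rw [← norm_neg]; simp only [neg_sub]; exact hlen_ib c a h.symm hc ha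
        have hflt : ((SimpleGraph.Walk.cons h q).support.filter (fun u => u ∉ Bnd)).length
            = (q.support.filter (fun u => u ∉ Bnd)).length := by
          rw [hsupp]; simp [List.filter_cons, ha]
        rw [hflt]
        simp only [if_pos ha] at *
        have hcif : (if c ∈ Bnd then (0:ℝ) else 1) = 1 := by simp [hc]
        rw [hcif] at ih
        calc ‖pos a - pos b‖ ≤ ‖pos a - pos c‖ + ‖pos c - pos b‖ := htri
          _ ≤ r + (r * (2 * Iq - 1 - (if b ∈ Bnd then 0 else 1))) := by
              rw [hlen]; linarith [ih]
          _ ≤ r * (2 * Iq - 0 - (if b ∈ Bnd then 0 else 1)) := by ring_nf; linarith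
      · have hlenflt : ((SimpleGraph.Walk.cons h q).support.filter (fun u => u ∉ Bnd)).length
            = (q.support.filter (fun u => u ∉ Bnd)).length + 1 := by
          rw [hsupp]; simp [List.filter_cons, ha]
        have hcast : ((((SimpleGraph.Walk.cons h q).support.filter (fun u => u ∉ Bnd)).length : ℕ) : ℝ)
            = Iq + 1 := by rw [hlenflt]; push_cast [hIq]; ring
        rw [hcast]
        simp only [if_neg ha]
        by_cases hc : c ∈ Bnd
        · have hlen : ‖pos a - pos c‖ = r := hlen_ib a c h ha hc
          have hcif : (if c ∈ Bnd then (0:ℝ) else 1) = 0 := by simp [hc]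
          rw [hcif] at ih
          calc ‖pos a - pos b‖ ≤ ‖pos a - pos c‖ + ‖pos c - pos b‖ := htri
            _ ≤ r + (r * (2 * Iq - 0 - (if b ∈ Bnd then 0 else 1))) := by
                rw [hlen]; linarith [ih]
            _ ≤ r * (2 * (Iq + 1) - 1 - (if b ∈ Bnd then 0 else 1)) := by ring_nf; linarith
        · have hlen : ‖pos a - pos c‖ = 2 * r := hlen_ii a c h ha hc
          have hcif : (if c ∈ Bnd then (0:ℝ) else 1) = 1 := by simp [hc]
          rw [hcif] at ih
          calc ‖pos a - pos b‖ ≤ ‖pos a - pos c‖ + ‖pos c - pos b‖ := htri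
            _ ≤ 2 * r + (r * (2 * Iq - 1 - (if b ∈ Bnd then 0 else 1))) := by
                rw [hlen]; linarith [ih]
            _ ≤ r * (2 * (Iq + 1) - 1 - (if b ∈ Bnd then 0 else 1)) := by ring_nf; linarith
  -- distance bound between any two vertices
  have distbound : ∀ a b : ι, ‖pos a - pos b‖ ≤ r * (2 * n) := by
    intro a b
    obtain ⟨W⟩ := hconn a b
    set P : G.Walk a b := (W.toPath : G.Path a b).1 with hP
    have hPpath : P.IsPath := (W.toPath : G.Path a b).2
    have hb := walkbound a b P
    have hIlen : ((P.support.filter (fun u => u ∉ Bnd)).length : ℝ) ≤ (n : ℝ) := by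
      have hnd : (P.support.filter (fun u => u ∉ Bnd)).Nodup :=
        hPpath.support_nodup.filter _
      have hsub : (P.support.filter (fun u => u ∉ Bnd)).toFinset ⊆
          Finset.univ.filter (fun u => u ∉ Bnd) := by
        intro z hz
        rw [List.mem_toFinset, List.mem_filter] at hz
        simp only [Finset.mem_filter, Finset.mem_univ, true_and]
        simpa using hz.2
      have := Finset.card_le_card hsub
      rw [List.toFinset_card_of_nodup hnd] at this
      exact_mod_cast le_trans this hcard
    have hea : (0:ℝ) ≤ (if a ∈ Bnd then 0 else 1) := by split <;> norm_num
    have heb : (0:ℝ) ≤ (if b ∈ Bnd then 0 else 1) := by split <;> norm_num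
    calc ‖pos a - pos b‖ ≤ _ := hb
      _ ≤ r * (2 * n) := by
          apply mul_le_mul_of_nonneg_left _ hr.le
          linarith
  -- case split on existence of a boundary vertex
  by_cases hBnd : ∃ u, u ∈ Bnd
  · -- there are boundary vertices; find opposite faces
    obtain ⟨u₀, hu₀⟩ := hBnd
    obtain ⟨v₀, hv₀⟩ := hnbr u₀
    obtain ⟨m₀, hlen₀, hcoords₀, hside₀⟩ := face u₀ hu₀ v₀ hv₀
    have T : ∑ u ∈ Bnd, ∑ v ∈ G.neighborFinset u,
        w u v * (‖pos u - pos v‖⁻¹ * (pos u m₀ - pos v m₀)) = 0 := by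
      have h0 := congrArg (fun z => (EuclideanSpace.proj m₀ :
        EuclideanSpace ℝ (Fin d) →L[ℝ] ℝ) z) hbndbal
      simpa [map_sum, map_smul, map_sub, smul_eq_mul] using h0
    suffices hab : ∃ a b : ι, pos a m₀ = 0 ∧ pos b m₀ = L m₀ by
      obtain ⟨a, b, ha, hb⟩ := hab
      have h1 : L m₀ = |pos b m₀ - pos a m₀| := by
        rw [ha, hb, sub_zero]; exact (abs_of_nonneg (hL0 m₀)).symm
      have h2 := coord_abs_le' (pos b) (pos a) m₀
      have h3 := distbound b a
      have h4 : L ⟨0, hd⟩ ≤ L m₀ := hLmono (by rw [Fin.le_def]; exact Nat.zero_le _)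
      linarith
    -- evaluate each boundary term
    have hterm : ∀ u ∈ Bnd, ∀ v ∈ G.neighborFinset u,
        (pos u m₀ - pos v m₀ = 0) ∨
        (pos u m₀ = 0 ∧ pos u m₀ - pos v m₀ = -r) ∨
        (pos u m₀ = L m₀ ∧ pos u m₀ - pos v m₀ = r) := by
      intro u hu v hv
      have hadj : G.Adj u v := (SimpleGraph.mem_neighborFinset G u v).mp hv
      obtain ⟨m, hlen, hcoords, hside⟩ := face u hu v hadj
      by_cases hmm : m = m₀
      · subst hmm
        rcases hside with ⟨h1, h2⟩ | ⟨h1, h2⟩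
        · exact Or.inr (Or.inl ⟨h1, by rw [h1, h2]; ring⟩)
        · exact Or.inr (Or.inr ⟨h1, by rw [h1, h2]; ring⟩)
      · exact Or.inl (by rw [hcoords m₀ (Ne.symm hmm)]; ring)
    have hterm_len : ∀ u ∈ Bnd, ∀ v ∈ G.neighborFinset u, ‖pos u - pos v‖ = r := by
      intro u hu v hv
      have hadj : G.Adj u v := (SimpleGraph.mem_neighborFinset G u v).mp hv
      obtain ⟨m, hlen, _, _⟩ := face u hu v hadj
      exact hlen
    by_cases hbot : ∃ a ∈ Bnd, pos a m₀ = 0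
    · by_cases htop : ∃ b ∈ Bnd, pos b m₀ = L m₀
      · obtain ⟨a, _, ha⟩ := hbot
        obtain ⟨b, _, hb⟩ := htop
        exact ⟨a, b, ha, hb⟩
      · -- no top face: all terms nonpositive, one strictly negative: contradiction
        exfalso
        push_neg at htop
        have hnonpos : ∀ u ∈ Bnd, ∀ v ∈ G.neighborFinset u,
            w u v * (‖pos u - pos v‖⁻¹ * (pos u m₀ - pos v m₀)) ≤ 0 := by
          intro u hu v hv
          have hadj : G.Adj u v := (SimpleGraph.mem_neighborFinset G u v).mp hv
          have hw := hwpos u v hadj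
          rcases hterm u hu v hv with h | ⟨_, h⟩ | ⟨h1, _⟩
          · rw [h]; simp
          · rw [h, hterm_len u hu v hv]
            have hrinv : (0:ℝ) < r⁻¹ := inv_pos.mpr hr
            have e : w u v * (r⁻¹ * -r) = -(w u v * (r⁻¹ * r)) := by ring
            linarith [mul_pos hw (mul_pos hrinv hr), e]
          · exact absurd h1 (htop u hu)
        -- the term at u₀, v₀ is strictly negative
        have hv₀m : v₀ ∈ G.neighborFinset u₀ := (SimpleGraph.mem_neighborFinset G u₀ v₀).mpr hv₀
        have hneg : w u₀ v₀ * (‖pos u₀ - pos v₀‖⁻¹ * (pos u₀ m₀ - pos v₀ m₀)) < 0 := by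
          have hw := hwpos u₀ v₀ hv₀
          rcases hside₀ with ⟨h1, h2⟩ | ⟨h1, _⟩
          · rw [hlen₀, h1, h2]
            have hrinv : (0:ℝ) < r⁻¹ := inv_pos.mpr hr
            have e : w u₀ v₀ * (r⁻¹ * (0 - r)) = -(w u₀ v₀ * (r⁻¹ * r)) := by ring
            linarith [mul_pos hw (mul_pos hrinv hr), e]
          · exact absurd h1 (htop u₀ hu₀)
        have hsum_neg : ∑ u ∈ Bnd, ∑ v ∈ G.neighborFinset u,
            w u v * (‖pos u - pos v‖⁻¹ * (pos u m₀ - pos v m₀)) < 0 := by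
          have h1 : ∑ v ∈ G.neighborFinset u₀,
              w u₀ v * (‖pos u₀ - pos v‖⁻¹ * (pos u₀ m₀ - pos v m₀)) < 0 := by
            have := Finset.sum_lt_sum (f := fun v =>
                w u₀ v * (‖pos u₀ - pos v‖⁻¹ * (pos u₀ m₀ - pos v m₀)))
              (g := fun _ => (0:ℝ)) (s := G.neighborFinset u₀)
              (fun v hv => hnonpos u₀ hu₀ v hv) ⟨v₀, hv₀m, hneg⟩
            simpa using this
          have h2 := Finset.sum_lt_sum (f := fun u => ∑ v ∈ G.neighborFinset u,
              w u v * (‖pos u - pos v‖⁻¹ * (pos u m₀ - pos v m₀)))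
            (g := fun _ => (0:ℝ)) (s := Bnd)
            (fun u hu => Finset.sum_nonpos (fun v hv => hnonpos u hu v hv)) ⟨u₀, hu₀, h1⟩
          simpa using h2
        linarith [T, hsum_neg]
    · -- no bottom face: all terms nonnegative, one strictly positive: contradiction
      exfalso
      push_neg at hbot
      have hnonneg : ∀ u ∈ Bnd, ∀ v ∈ G.neighborFinset u,
          0 ≤ w u v * (‖pos u - pos v‖⁻¹ * (pos u m₀ - pos v m₀)) := by
        intro u hu v hv
        have hadj : G.Adj u v := (SimpleGraph.mem_neighborFinset G u v).mp hv
        have hw := hwpos u v hadj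
        rcases hterm u hu v hv with h | ⟨h1, _⟩ | ⟨_, h⟩
        · rw [h]; simp
        · exact absurd h1 (hbot u hu)
        · rw [h, hterm_len u hu v hv]
          have hrinv : (0:ℝ) < r⁻¹ := inv_pos.mpr hr
          exact le_of_lt (mul_pos hw (mul_pos hrinv hr))
      have hv₀m : v₀ ∈ G.neighborFinset u₀ := (SimpleGraph.mem_neighborFinset G u₀ v₀).mpr hv₀
      have hpos' : 0 < w u₀ v₀ * (‖pos u₀ - pos v₀‖⁻¹ * (pos u₀ m₀ - pos v₀ m₀)) := by
        have hw := hwpos u₀ v₀ hv₀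
        rcases hside₀ with ⟨h1, _⟩ | ⟨h1, h2⟩
        · exact absurd h1 (hbot u₀ hu₀)
        · rw [hlen₀, h1, h2]
          have hrinv : (0:ℝ) < r⁻¹ := inv_pos.mpr hr
          have e : L m₀ - (L m₀ - r) = r := by ring
          rw [e]
          exact mul_pos hw (mul_pos hrinv hr)
      have hsum_pos : 0 < ∑ u ∈ Bnd, ∑ v ∈ G.neighborFinset u,
          w u v * (‖pos u - pos v‖⁻¹ * (pos u m₀ - pos v m₀)) := by
        have h1 : 0 < ∑ v ∈ G.neighborFinset u₀,
            w u₀ v * (‖pos u₀ - pos v‖⁻¹ * (pos u₀ m₀ - pos v m₀)) :=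
          Finset.sum_pos' (fun v hv => hnonneg u₀ hu₀ v hv) ⟨v₀, hv₀m, hpos'⟩
        exact Finset.sum_pos'
          (fun u hu => Finset.sum_nonneg (fun v hv => hnonneg u hu v hv)) ⟨u₀, hu₀, h1⟩
      linarith [T, hsum_pos]
  · -- no boundary vertex at all: all coordinates constant, contradiction
    exfalso
    push_neg at hBnd
    have coordeq : ∀ m : Fin d, pos p m = pos q m := by
      intro m
      obtain ⟨u₁, _, hmax⟩ := Finset.exists_max_image Finset.univ (fun u => pos u m)
        ⟨p, Finset.mem_univ p⟩
      have step : ∀ a c : ι, G.Adj a c → pos a m = pos u₁ m → pos c m = pos u₁ m := by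
        intro a c hac ha
        have hbalA := hbal a (hBnd a)
        have hproj : ∑ v ∈ G.neighborFinset a,
            w a v * (‖pos a - pos v‖⁻¹ * (pos a m - pos v m)) = 0 := by
          have h0 := congrArg (fun z => (EuclideanSpace.proj m :
            EuclideanSpace ℝ (Fin d) →L[ℝ] ℝ) z) hbalA
          simpa [map_sum, map_smul, map_sub, smul_eq_mul] using h0
        have hnonneg : ∀ v ∈ G.neighborFinset a,
            0 ≤ w a v * (‖pos a - pos v‖⁻¹ * (pos a m - pos v m)) := by
          intro v hv
          have hadj : G.Adj a v := (SimpleGraph.mem_neighborFinset G a v).mp hv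
          have hw := (hwpos a v hadj).le
          have hd1 : pos v m ≤ pos a m := by
            rw [ha]; exact hmax v (Finset.mem_univ v)
          have hni : (0:ℝ) ≤ ‖pos a - pos v‖⁻¹ := inv_nonneg.mpr (norm_nonneg _)
          exact mul_nonneg hw (mul_nonneg hni (by linarith))
        have hall := (Finset.sum_eq_zero_iff_of_nonneg hnonneg).mp hproj
        have hc : c ∈ G.neighborFinset a := (SimpleGraph.mem_neighborFinset G a c).mpr hac
        have hz := hall c hc
        have hw := hwpos a c hac
        have hlen : ‖pos a - pos c‖ = 2 * r := hlen_ii a c hac (hBnd a) (hBnd c)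
        rw [hlen] at hz
        have h2r : (0:ℝ) < (2 * r)⁻¹ := inv_pos.mpr (by linarith)
        have : pos a m - pos c m = 0 := by
          rcases mul_eq_zero.mp hz with h | h
          · exact absurd h (ne_of_gt hw)
          · rcases mul_eq_zero.mp h with h | h
            · exact absurd h (ne_of_gt h2r)
            · exact h
        linarith [ha, this]
      have prop : ∀ a b : ι, ∀ W : G.Walk a b,
          pos a m = pos u₁ m → pos b m = pos u₁ m := by
        intro a b W
        induction W with
        | nil => exact id
        | cons h q ih => intro ha; exact ih (step _ _ h ha)
      obtain ⟨Wp⟩ := hconn u₁ p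
      obtain ⟨Wq⟩ := hconn u₁ q
      rw [prop u₁ p Wp rfl, prop u₁ q Wq rfl]
    have hzero : ‖pos p - pos q‖ = 0 := by
      rw [EuclideanSpace.norm_eq]
      have hz : ∀ i : Fin d, ‖(pos p - pos q) i‖ ^ 2 = 0 := by
        intro i
        rw [PiLp.sub_apply, coordeq i]
        simp
      rw [Finset.sum_congr rfl (fun i _ => hz i)]
      simp
    rw [hlen_ii p q hpq (hBnd p) (hBnd q)] at hzero
    linarith
end
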